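/- Let b : ℝ^d → ℝ^d be a C¹ ℤ^d-periodic vector field and μ a Borel probability measure on the torus Y_d. Then the condition '∫_{Y_d} b·∇ψ dμ = 0 for every C¹ ℤ^d-periodic ψ' is equivalent to the divergence–curl identity: for every C¹ function ψ : ℝ^d → ℝ whose gradient ∇ψ is ℤ^d-periodic and continuous, ∫_{Y_d} b(y)·∇ψ(y) dμ(y) = (∫_{Y_d} b dμ) · (∫_{Y_d} ∇ψ(y) dy), where the last integral is over the unit cube with Lebesgue measure. -/

import Mathlib

open MeasureTheory Filter Topology
open scoped RealInnerProductSpace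

noncomputable section

/-- An integer vector `k ∈ ℤ^d` seen as a point of `ℝ^d`. -/
def intVec (d : ℕ) (k : Fin d → ℤ) : EuclideanSpace ℝ (Fin d) := WithLp.toLp 2 (fun i => (k i : ℝ))

/-- A function on `ℝ^d` is `ℤ^d`-periodic. -/
def IsZdPeriodic {α : Type*} (d : ℕ) (f : EuclideanSpace ℝ (Fin d) → α) : Prop :=
  ∀ (x : EuclideanSpace ℝ (Fin d)) (k : Fin d → ℤ), f (x + intVec d k) = f x

/-- The unit cube `[0,1)^d`, a fundamental domain for the torus `Y_d = ℝ^d/ℤ^d`. -/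
def unitCube (d : ℕ) : Set (EuclideanSpace ℝ (Fin d)) :=
  {x | ∀ i, x i ∈ Set.Ico (0 : ℝ) 1}

/-- A Borel probability measure on the torus `Y_d`, identified with a Borel probability
measure on `ℝ^d` carried by the fundamental domain `[0,1)^d`. -/
def IsTorusMeasure {d : ℕ} (μ : Measure (EuclideanSpace ℝ (Fin d))) : Prop :=
  IsProbabilityMeasure μ ∧ μ (unitCube d)ᶜ = 0

/-- A measure on the torus is invariant for the flow `X` if
`∫ φ(X(t,y)) dμ(y) = ∫ φ dμ` for all `t` and all continuous `ℤ^d`-periodic `φ`. -/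
def IsInvariantMeasure {d : ℕ} (X : ℝ → EuclideanSpace ℝ (Fin d) → EuclideanSpace ℝ (Fin d))
    (μ : Measure (EuclideanSpace ℝ (Fin d))) : Prop :=
  ∀ (t : ℝ) (φ : EuclideanSpace ℝ (Fin d) → ℝ), Continuous φ → IsZdPeriodic d φ →
    ∫ y, φ (X t y) ∂μ = ∫ y, φ y ∂μ

/-!
Periodicity of `∇ψ` makes each difference `ψ (x + eᵢ) - ψ x` a constant `vᵢ`, so
`q = ψ - ⟪v, ·⟫` is invariant under the generators of `ℤ^d`, hence periodic, and `∇ψ = ∇q + v`.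
The divergence theorem on the unit cube, whose opposite faces carry equal values of a periodic
function, gives `∫_{Y_d} ∇q = 0`, so `∫_{Y_d} ∇ψ = v`, while the hypothesis gives
`∫ b·∇q dμ = 0`, so `∫ b·∇ψ dμ = (∫ b dμ)·v`. Conversely a periodic `ψ` has `∫_{Y_d} ∇ψ = 0`.
-/

open Set

variable {d : ℕ}

theorem intVec_zero : intVec d 0 = 0 := by
  ext; simp [intVec]

theorem intVec_add (k l : Fin d → ℤ) : intVec d (k + l) = intVec d k + intVec d l := by
  ext; simp [intVec]

theorem intVec_neg (k : Fin d → ℤ) : intVec d (-k) = -intVec d k := by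
  ext; simp [intVec]

theorem intVec_single (i : Fin d) : intVec d (Pi.single i 1) = EuclideanSpace.single i 1 := by
  ext j; by_cases h : j = i <;> simp [intVec, h]

theorem IsZdPeriodic.comp {α β : Type*} {f : EuclideanSpace ℝ (Fin d) → α}
    (hf : IsZdPeriodic d f) (g : α → β) : IsZdPeriodic d (g ∘ f) :=
  fun x k => congrArg g (hf x k)

theorem isZdPeriodic_of_add_single {α : Type*} {f : EuclideanSpace ℝ (Fin d) → α}
    (hf : ∀ x i, f (x + EuclideanSpace.single i 1) = f x) : IsZdPeriodic d f := by
  let periods : AddSubgroup (Fin d → ℤ) :=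
    { carrier := {k | ∀ x, f (x + intVec d k) = f x}
      zero_mem' := fun x => by simp [intVec_zero]
      add_mem' := fun hk hl x => by rw [intVec_add, ← add_assoc, hl, hk]
      neg_mem' := fun {k} hk x => by
        rw [intVec_neg, ← hk (x + -intVec d k), neg_add_cancel_right] }
  have hsingle : ∀ i, Pi.single i 1 ∈ periods := fun i x => by
    rw [intVec_single]; exact hf x i
  intro x k
  have hk : k ∈ periods := by
    rw [← Finset.univ_sum_single k]
    refine AddSubgroup.sum_mem _ fun i _ => ?_
    simpa [← Pi.single_smul'] using AddSubgroup.zsmul_mem _ (hsingle i) (k i)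
  exact hk x

theorem toLp_preimage_unitCube :
    WithLp.toLp 2 ⁻¹' unitCube d = univ.pi fun _ => Ico (0 : ℝ) 1 := by
  ext; simp [unitCube]

theorem measurableSet_unitCube : MeasurableSet (unitCube d) :=
  (MeasurableEquiv.toLp 2 (Fin d → ℝ)).measurableSet_preimage.1 <| by
    simpa only [MeasurableEquiv.coe_toLp, toLp_preimage_unitCube] using
      MeasurableSet.univ_pi fun _ => measurableSet_Ico

theorem volume_unitCube : volume (unitCube d) = 1 := by
  rw [← (PiLp.volume_preserving_toLp (Fin d)).measure_preimage
      measurableSet_unitCube.nullMeasurableSet, toLp_preimage_unitCube, Real.volume_pi_Ico]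
  simp

instance isProbabilityMeasure_restrict_unitCube :
    IsProbabilityMeasure (volume.restrict (unitCube d)) :=
  ⟨by rw [Measure.restrict_apply_univ, volume_unitCube]⟩

theorem setIntegral_unitCube_eq_setIntegral_Icc {E : Type*} [NormedAddCommGroup E]
    [NormedSpace ℝ E] (g : EuclideanSpace ℝ (Fin d) → E) :
    ∫ y in unitCube d, g y = ∫ x in Icc 0 1, g (WithLp.toLp 2 x) := by
  rw [← (PiLp.volume_preserving_toLp (Fin d)).setIntegral_preimage_emb
      (MeasurableEquiv.toLp 2 (Fin d → ℝ)).measurableEmbedding, toLp_preimage_unitCube]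
  exact setIntegral_congr_set (by rw [volume_pi]; exact Measure.univ_pi_Ico_ae_eq_Icc)

theorem exists_add_intVec_mem_unitCube (x : EuclideanSpace ℝ (Fin d)) :
    ∃ k, x + intVec d k ∈ unitCube d :=
  ⟨fun i => -⌊x i⌋, fun i => by
    simpa [intVec, ← sub_eq_add_neg, Int.self_sub_floor] using
      (⟨Int.fract_nonneg (x i), Int.fract_lt_one (x i)⟩ : _ ∧ _)⟩

theorem IsZdPeriodic.exists_norm_le {E : Type*} [SeminormedAddCommGroup E]
    {f : EuclideanSpace ℝ (Fin d) → E} (hper : IsZdPeriodic d f) (hf : Continuous f) :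
    ∃ C, ∀ x, ‖f x‖ ≤ C := by
  have hK : IsCompact (WithLp.ofLp ⁻¹' Icc (0 : Fin d → ℝ) 1 : Set (EuclideanSpace ℝ (Fin d))) :=
    (PiLp.continuousLinearEquiv 2 ℝ _).toHomeomorph.isCompact_preimage.2 isCompact_Icc
  obtain ⟨C, hC⟩ := hK.exists_bound_of_continuousOn hf.continuousOn
  refine ⟨C, fun x => ?_⟩
  obtain ⟨k, hk⟩ := exists_add_intVec_mem_unitCube x
  rw [← hper x k]
  exact hC _ ⟨fun i => (hk i).1, fun i => (hk i).2.le⟩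

theorem IsZdPeriodic.integrable {E : Type*} [NormedAddCommGroup E]
    {f : EuclideanSpace ℝ (Fin d) → E} (hper : IsZdPeriodic d f) (hf : Continuous f)
    (μ : Measure (EuclideanSpace ℝ (Fin d))) [IsFiniteMeasure μ] : Integrable f μ :=
  let ⟨C, hC⟩ := hper.exists_norm_le hf
  (integrable_const C).mono' hf.aestronglyMeasurable (ae_of_all _ hC)

theorem ContDiff.continuous_gradient {𝕜 F : Type*} [RCLike 𝕜] [NormedAddCommGroup F]
    [InnerProductSpace 𝕜 F] [CompleteSpace F] {f : F → 𝕜} (hf : ContDiff 𝕜 1 f) :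
    Continuous (gradient f) :=
  (InnerProductSpace.toDual 𝕜 F).symm.continuous.comp (hf.continuous_fderiv one_ne_zero)

theorem ContDiff.sub_inner {F : Type*} [NormedAddCommGroup F] [InnerProductSpace ℝ F]
    {ψ : F → ℝ} {n : WithTop ℕ∞} (hψ : ContDiff ℝ n ψ) (v : F) :
    ContDiff ℝ n fun x => ψ x - ⟪v, x⟫ :=
  hψ.sub (innerSL ℝ v).contDiff

theorem gradient_eq_gradient_sub_inner_add {F : Type*} [NormedAddCommGroup F]
    [InnerProductSpace ℝ F] [CompleteSpace F] {ψ : F → ℝ} {y : F} (hψ : DifferentiableAt ℝ ψ y)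
    (v : F) : gradient ψ y = gradient (fun x => ψ x - ⟪v, x⟫) y + v := by
  have hgrad : HasGradientAt (fun x => ψ x - ⟪v, x⟫) (gradient ψ y - v) y := by
    rw [hasGradientAt_iff_hasFDerivAt, map_sub, toDual_gradient]
    exact hψ.hasFDerivAt.sub (InnerProductSpace.toDual ℝ F v).hasFDerivAt
  rw [hgrad.gradient, sub_add_cancel]

theorem sub_eq_sub_of_fderiv_add_eq {E F : Type*} [NormedAddCommGroup E] [NormedSpace ℝ E]
    [NormedAddCommGroup F] [NormedSpace ℝ F] {f : E → F} (hf : Differentiable ℝ f) {c : E}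
    (hc : ∀ x, fderiv ℝ f (x + c) = fderiv ℝ f x) (x : E) :
    f (x + c) - f x = f c - f 0 := by
  have hshift : Differentiable ℝ fun y => f (y + c) := hf.comp (differentiable_id.add_const c)
  have hderiv : ∀ y, fderiv ℝ (fun y => f (y + c) - f y) y = 0 := fun y => by
    rw [fderiv_fun_sub (hshift y) (hf y), fderiv_comp_add_right, hc, sub_self]
  simpa using is_const_of_fderiv_eq_zero (hshift.sub hf) hderiv x 0

theorem IsZdPeriodic.fderiv {E : Type*} [NormedAddCommGroup E] [NormedSpace ℝ E]
    {ψ : EuclideanSpace ℝ (Fin d) → E} (hper : IsZdPeriodic d ψ) :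
    IsZdPeriodic d (fderiv ℝ ψ) := fun x k => by
  rw [← fderiv_comp_add_right]
  exact congrArg (_root_.fderiv ℝ · x) (funext fun y => hper y k)

theorem IsZdPeriodic.gradient {ψ : EuclideanSpace ℝ (Fin d) → ℝ} (hper : IsZdPeriodic d ψ) :
    IsZdPeriodic d (gradient ψ) :=
  hper.fderiv.comp _

theorem exists_isZdPeriodic_sub_inner {ψ : EuclideanSpace ℝ (Fin d) → ℝ}
    (hψ : Differentiable ℝ ψ) (hgrad : IsZdPeriodic d (gradient ψ)) :
    ∃ v, IsZdPeriodic d fun x => ψ x - ⟪v, x⟫ := by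
  have hderiv : IsZdPeriodic d (fderiv ℝ ψ) := by
    simpa only [toDual_comp_gradient] using hgrad.comp (InnerProductSpace.toDual ℝ _)
  refine ⟨WithLp.toLp 2 fun i => ψ (EuclideanSpace.single i 1) - ψ 0,
    isZdPeriodic_of_add_single fun x i => ?_⟩
  have hstep := sub_eq_sub_of_fderiv_add_eq hψ
    (fun y => by simpa only [intVec_single] using hderiv y (Pi.single i 1)) x
  simp only [inner_add_right, EuclideanSpace.inner_single_right, conj_trivial, one_mul]
  linarith

theorem integral_Icc_fderiv_eq_zero_of_periodic {E : Type*} [NormedAddCommGroup E]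
    [NormedSpace ℝ E] [CompleteSpace E] {Q : (Fin d → ℝ) → E} (hQ : ContDiff ℝ 1 Q)
    (hper : ∀ x i, Q (x + Pi.single i 1) = Q x) (w : Fin d → ℝ) :
    ∫ x in Icc 0 1, fderiv ℝ Q x w = 0 := by
  obtain _ | n := d
  · simp only [Subsingleton.elim w 0, map_zero, integral_zero]
  have hdiv : ∀ x, ∑ i, (w i • fderiv ℝ Q x) (Pi.single i 1) = fderiv ℝ Q x w := fun x => by
    conv_rhs => rw [pi_eq_sum_univ' w]
    simp [map_sum]
  have hint : IntegrableOn (fun x => fderiv ℝ Q x w) (Icc 0 1) :=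
    ((hQ.continuous_fderiv one_ne_zero).clm_apply continuous_const).continuousOn
      |>.integrableOn_compact isCompact_Icc
  have hfaces : ∀ i (x : Fin n → ℝ), (i.insertNth 1 x : Fin (n + 1) → ℝ) =
      i.insertNth 0 x + Pi.single i 1 := fun i x => by
    ext j
    refine Fin.succAboveCases i ?_ (fun l => ?_) j <;> simp
  -- Divergence theorem for the field `(wᵢ • Q)ᵢ`, whose divergence is `DQ · w`.
  rw [← setIntegral_congr_fun measurableSet_Icc fun x _ => hdiv x,
    integral_divergence_of_hasFDerivAt_off_countable' 0 1 zero_le_one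
      (fun i => w i • Q) (fun i x => w i • fderiv ℝ Q x) ∅ countable_empty
      (fun i => (hQ.continuous.const_smul _).continuousOn)
      (fun x _ i => ((hQ.differentiable one_ne_zero) x).hasFDerivAt.const_smul (w i))
      (by simpa only [hdiv] using hint)]
  refine Finset.sum_eq_zero fun i _ => ?_
  simp [hfaces, hper]

theorem IsZdPeriodic.setIntegral_unitCube_fderiv {E : Type*} [NormedAddCommGroup E]
    [NormedSpace ℝ E] [CompleteSpace E] {ψ : EuclideanSpace ℝ (Fin d) → E}
    (hper : IsZdPeriodic d ψ) (hψ : ContDiff ℝ 1 ψ) (w : EuclideanSpace ℝ (Fin d)) :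
    ∫ y in unitCube d, _root_.fderiv ℝ ψ y w = 0 := by
  let L := (PiLp.continuousLinearEquiv 2 ℝ fun _ : Fin d => ℝ).symm
  have hQper : ∀ x i, (ψ ∘ L) (x + Pi.single i 1) = (ψ ∘ L) x := fun x i => by
    simpa [L, intVec_single] using hper (WithLp.toLp 2 x) (Pi.single i 1)
  rw [setIntegral_unitCube_eq_setIntegral_Icc,
    ← integral_Icc_fderiv_eq_zero_of_periodic (hψ.comp L.contDiff) hQper (WithLp.ofLp w)]
  congr! with x
  simp [L, L.comp_right_fderiv]

theorem IsZdPeriodic.setIntegral_unitCube_gradient {ψ : EuclideanSpace ℝ (Fin d) → ℝ}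
    (hper : IsZdPeriodic d ψ) (hψ : ContDiff ℝ 1 ψ) :
    ∫ y in unitCube d, _root_.gradient ψ y = 0 := by
  have hint := hper.gradient.integrable hψ.continuous_gradient (volume.restrict (unitCube d))
  rw [← inner_self_eq_zero (𝕜 := ℝ), ← integral_inner hint]
  simpa [inner_gradient_right] using hper.setIntegral_unitCube_fderiv hψ _

theorem setIntegral_unitCube_gradient_eq {ψ : EuclideanSpace ℝ (Fin d) → ℝ}
    {v : EuclideanSpace ℝ (Fin d)} (hψ : ContDiff ℝ 1 ψ)
    (hq : IsZdPeriodic d fun x => ψ x - ⟪v, x⟫) :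
    ∫ y in unitCube d, gradient ψ y = v := by
  have hq₁ := hψ.sub_inner v
  simp_rw [gradient_eq_gradient_sub_inner_add (hψ.differentiable one_ne_zero _) v]
  rw [integral_add (hq.gradient.integrable hq₁.continuous_gradient _) (integrable_const v),
    hq.setIntegral_unitCube_gradient hq₁]
  simp

theorem integral_inner_gradient_eq_add {b : EuclideanSpace ℝ (Fin d) → EuclideanSpace ℝ (Fin d)}
    (hb : Continuous b) (hbper : IsZdPeriodic d b) (μ : Measure (EuclideanSpace ℝ (Fin d)))
    [IsFiniteMeasure μ] {ψ : EuclideanSpace ℝ (Fin d) → ℝ} {v : EuclideanSpace ℝ (Fin d)}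
    (hψ : ContDiff ℝ 1 ψ) (hq : IsZdPeriodic d fun x => ψ x - ⟪v, x⟫) :
    ∫ y, (⟪b y, gradient ψ y⟫ : ℝ) ∂μ =
      ∫ y, ⟪b y, gradient (fun x => ψ x - ⟪v, x⟫) y⟫ ∂μ + ⟪∫ y, b y ∂μ, v⟫ := by
  have hbq : IsZdPeriodic d fun y => ⟪b y, gradient (fun x => ψ x - ⟪v, x⟫) y⟫ :=
    fun x k => by simp only [hbper x k, hq.gradient x k]
  have hbv : IsZdPeriodic d fun y => ⟪b y, v⟫ := fun x k => by simp only [hbper x k]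
  simp_rw [gradient_eq_gradient_sub_inner_add (hψ.differentiable one_ne_zero _) v,
    inner_add_right]
  rw [integral_add (hbq.integrable (hb.inner (hψ.sub_inner v).continuous_gradient) μ)
    (hbv.integrable (hb.inner continuous_const) μ)]
  simp only [real_inner_comm v, integral_inner (hbper.integrable hb μ) v]

/-- The condition `∫ b·∇ψ dμ = 0` for every `C¹` `ℤ^d`-periodic `ψ` is equivalent to the
divergence-curl identity: for every `C¹` function `ψ` whose gradient is `ℤ^d`-periodic
(and continuous), `∫ b·∇ψ dμ = (∫ b dμ)·(∫_{[0,1)^d} ∇ψ(y) dy)`. -/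
theorem stmt9 (d : ℕ) (b : EuclideanSpace ℝ (Fin d) → EuclideanSpace ℝ (Fin d))
    (hb : ContDiff ℝ 1 b) (hbper : IsZdPeriodic d b)
    (μ : Measure (EuclideanSpace ℝ (Fin d))) (hμ : IsTorusMeasure μ) :
    (∀ ψ : EuclideanSpace ℝ (Fin d) → ℝ, ContDiff ℝ 1 ψ → IsZdPeriodic d ψ →
        ∫ y, (⟪b y, gradient ψ y⟫ : ℝ) ∂μ = 0) ↔
      (∀ ψ : EuclideanSpace ℝ (Fin d) → ℝ, ContDiff ℝ 1 ψ →
        IsZdPeriodic d (fun y => gradient ψ y) →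
        ∫ y, (⟪b y, gradient ψ y⟫ : ℝ) ∂μ =
          (⟪∫ y, b y ∂μ, ∫ y in unitCube d, gradient ψ y⟫ : ℝ)) := by
  have : IsProbabilityMeasure μ := hμ.1
  constructor
  · intro H ψ hψ hgrad
    obtain ⟨v, hq⟩ := exists_isZdPeriodic_sub_inner (hψ.differentiable one_ne_zero) hgrad
    rw [setIntegral_unitCube_gradient_eq hψ hq,
      integral_inner_gradient_eq_add hb.continuous hbper μ hψ hq, H _ (hψ.sub_inner v) hq,
      zero_add]
  · intro H ψ hψ hper
    rw [H ψ hψ hper.gradient, hper.setIntegral_unitCube_gradient hψ, inner_zero_right]
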